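/- If w and v are weight structures on a triangulated category C with C_{w≤0} ⊆ C_{v≤0} and C_{w≥0} ⊆ C_{v≥0}, then w = v, i.e., both inclusions are equalities. -/

import Mathlib

open CategoryTheory CategoryTheory.Limits CategoryTheory.Pretriangulated ZeroObject

universe v u

variable (C : Type u) [Category.{v} C] [HasZeroObject C] [HasShift C ℤ] [Preadditive C]
  [∀ n : ℤ, (shiftFunctor C n).Additive] [Pretriangulated C]

/-- `X` is a retract of `Y`: the identity of `X` factors through `Y`. -/
def IsRetractOf {A : Type*} [Category A] (X Y : A) : Prop :=
  ∃ (i : X ⟶ Y) (p : Y ⟶ X), i ≫ p = 𝟙 X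

/-- A weight structure on a (pre)triangulated category `C` (homological convention):
a pair of retraction-closed classes `le = C_{w≤0}` and `ge = C_{w≥0}`, semi-invariant
with respect to translations, orthogonal (`Hom(X, Y[1]) = 0` for `X ∈ C_{w≤0}`,
`Y ∈ C_{w≥0}`), and such that every object admits a weight decomposition. -/
structure WeightStructure where
  /-- the class `C_{w≤0}` -/
  le : C → Prop
  /-- the class `C_{w≥0}` -/
  ge : C → Prop
  le_retract : ∀ X Y : C, le Y → IsRetractOf X Y → le X
  ge_retract : ∀ X Y : C, ge Y → IsRetractOf X Y → ge X
  /-- `C_{w≤0} ⊆ C_{w≤0}[1]` -/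
  le_shift : ∀ X : C, le X → le (X⟦(-1 : ℤ)⟧)
  /-- `C_{w≥0}[1] ⊆ C_{w≥0}` -/
  ge_shift : ∀ X : C, ge X → ge (X⟦(1 : ℤ)⟧)
  /-- orthogonality -/
  orthogonal : ∀ X Y : C, le X → ge Y → ∀ f : X ⟶ Y⟦(1 : ℤ)⟧, f = 0
  /-- weight decompositions -/
  decomp : ∀ M : C, ∃ (L R : C) (f : L ⟶ M) (g : M ⟶ R⟦(1 : ℤ)⟧)
    (h : R⟦(1 : ℤ)⟧ ⟶ L⟦(1 : ℤ)⟧), le L ∧ ge R ∧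
    Triangle.mk f g h ∈ distTriang C

variable {C}

/-- The heart `C_{w=0} = C_{w≤0} ∩ C_{w≥0}` of a weight structure. -/
def WeightStructure.heart (w : WeightStructure C) (X : C) : Prop := w.le X ∧ w.ge X

/-- A weight structure is bounded if every object has weights in a finite range. -/
def WeightStructure.Bounded (w : WeightStructure C) : Prop :=
  ∀ M : C, (∃ i : ℤ, w.ge (M⟦i⟧)) ∧ (∃ j : ℤ, w.le (M⟦j⟧))

/-!
In a weight decomposition `L → M → R⟦1⟧ → L⟦1⟧`, the middle map vanishes as soon as `M` is
left orthogonal to `C_{w≥0}⟦1⟧`; then `L → M` is split epi and `M` is a retract of `L`.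
Hence `C_{w≤0}` is exactly the left orthogonal of `C_{w≥0}⟦1⟧`, and dually `C_{w≥0}` is the
right orthogonal of `C_{w≤0}⟦-1⟧`. Enlarging one class can therefore only shrink the other.
-/

lemma IsRetractOf.of_retract {A : Type*} [Category A] {X Y : A} (h : Retract X Y) :
    IsRetractOf X Y :=
  ⟨h.i, h.r, h.retract⟩

lemma IsRetractOf.of_shift {A : Type*} [Category A] [HasShift A ℤ] {X Y : A} (n : ℤ)
    (h : IsRetractOf (X⟦n⟧) (Y⟦n⟧)) : IsRetractOf X Y := by
  obtain ⟨i, r, hir⟩ := h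
  exact .of_retract <| (Retract.ofIso ((shiftEquiv A n).unitIso.app X)).trans <|
    (Retract.map ⟨i, r, hir⟩ (shiftFunctor A (-n))).trans
      (Retract.ofIso ((shiftEquiv A n).unitIso.app Y).symm)

namespace WeightStructure

lemma le_of_orthogonal (u : WeightStructure C) (X : C)
    (h : ∀ Y : C, u.ge Y → ∀ f : X ⟶ Y⟦(1 : ℤ)⟧, f = 0) : u.le X := by
  obtain ⟨L, R, f, g, _, hL, hR, hT⟩ := u.decomp X
  obtain ⟨s, hs⟩ := Triangle.coyoneda_exact₂ _ hT (𝟙 X) (by rw [h R hR g]; exact Limits.comp_zero)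
  exact u.le_retract X L hL ⟨s, f, hs.symm⟩

lemma ge_of_orthogonal (u : WeightStructure C) (Y : C)
    (h : ∀ X : C, u.le X → ∀ f : X ⟶ Y⟦(1 : ℤ)⟧, f = 0) : u.ge Y := by
  obtain ⟨L, R, f, g, _, hL, hR, hT⟩ := u.decomp (Y⟦(1 : ℤ)⟧)
  obtain ⟨r, hr⟩ := Triangle.yoneda_exact₂ _ hT (𝟙 _) (by rw [h L hL f]; exact Limits.zero_comp)
  exact u.ge_retract Y R hR (.of_shift 1 ⟨g, r, hr.symm⟩)

lemma le_of_ge_imp {w v : WeightStructure C} (hge : ∀ X : C, w.ge X → v.ge X) {X : C}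
    (hX : v.le X) : w.le X :=
  w.le_of_orthogonal X fun Y hY => v.orthogonal X Y hX (hge Y hY)

lemma ge_of_le_imp {w v : WeightStructure C} (hle : ∀ X : C, w.le X → v.le X) {Y : C}
    (hY : v.ge Y) : w.ge Y :=
  w.ge_of_orthogonal Y fun X hX => v.orthogonal X Y (hle X hX) hY

end WeightStructure

theorem weightStructure_uniqueness (w v : WeightStructure C)
    (hle : ∀ X : C, w.le X → v.le X) (hge : ∀ X : C, w.ge X → v.ge X) :
    (∀ X : C, w.le X ↔ v.le X) ∧ (∀ X : C, w.ge X ↔ v.ge X) :=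
  ⟨fun _ => ⟨hle _, WeightStructure.le_of_ge_imp hge⟩,
    fun _ => ⟨hge _, WeightStructure.ge_of_le_imp hle⟩⟩
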